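/- In a complete graph K_m with nodes sorted by non-decreasing threshold t(v_1) ≤ ... ≤ t(v_m), for any 1 ≤ ℓ ≤ λ, if there exists an ℓ-optimal incentive solution for K_m that influences exactly k < m nodes by the end of round ℓ−1, then there exists an ℓ-optimal solution (same cost) that influences exactly the nodes {v_1, ..., v_k} by the end of round ℓ−1. -/

import Mathlib

/-!
The process `kInfl m t p` only sees the residual thresholds `t v - p v`: permuting the residual
thresholds among the nodes (within what the thresholds allow) permutes the process and keeps
the total incentive. If `u < k ≤ v` with `u` not yet influenced after round `r` and `v`
influenced, then `v` has the smaller residual threshold and `t u ≤ t v`, so the residual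
thresholds of `u` and `v` can be exchanged. Repeating this exchange moves the set influenced
after round `r` onto the prefix `{0, …, k-1}`.
-/

open Finset

/-- Influence process on a complete graph with node set `{0,…,m-1}`, thresholds `t`,
incentives `p`: at round 0 exactly the nodes with `p v = t v` are influenced; afterwards
a node is influenced once the number of already influenced other nodes reaches `t v - p v`. -/
def kInfl (m : ℕ) (t p : ℕ → ℕ) : ℕ → Finset ℕ
  | 0 => (range m).filter fun v => p v = t v
  | ℓ + 1 => kInfl m t p ℓ ∪ (range m).filter fun v =>
      t v - p v ≤ ((kInfl m t p ℓ).erase v).card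

/-- `kOpt t ℓ m`: minimum total incentive influencing all of the complete graph on
`{0,…,m-1}` within `ℓ` rounds. -/
noncomputable def kOpt (t : ℕ → ℕ) (ℓ m : ℕ) : ℕ :=
  sInf {c : ℕ | ∃ p : ℕ → ℕ, (∀ v < m, p v ≤ t v) ∧
    kInfl m t p ℓ = range m ∧ c = ∑ v ∈ range m, p v}

section Influence

variable {m : ℕ} {t p : ℕ → ℕ}

lemma kInfl_subset_range (r : ℕ) : kInfl m t p r ⊆ range m := by
  induction r with
  | zero => exact filter_subset _ _
  | succ r ih => exact union_subset ih (filter_subset _ _)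

lemma sub_le_card_of_mem_kInfl_succ {r v : ℕ} (hv : v ∈ kInfl m t p (r + 1)) :
    t v - p v ≤ #(kInfl m t p r) := by
  induction r generalizing v with
  | zero =>
    rcases mem_union.1 hv with h | h
    · simp [kInfl, (mem_filter.1 h).2]
    · exact (mem_filter.1 h).2.trans (card_le_card (erase_subset _ _))
  | succ r ih =>
    rcases mem_union.1 hv with h | h
    · exact (ih h).trans (card_le_card subset_union_left)
    · exact (mem_filter.1 h).2.trans (card_le_card (erase_subset _ _))

lemma sub_lt_sub_of_mem_kInfl_of_notMem (hp : ∀ v < m, p v ≤ t v) {r u v : ℕ}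
    (hu : u < m) (huS : u ∉ kInfl m t p r) (hvS : v ∈ kInfl m t p r) :
    t v - p v < t u - p u := by
  cases r with
  | zero =>
    have hpu : p u ≠ t u := fun h => huS (mem_filter.2 ⟨mem_range.2 hu, h⟩)
    have := hp u hu
    have := (mem_filter.1 hvS).2
    omega
  | succ r =>
    have huS' : u ∉ kInfl m t p r := fun h => huS (mem_union_left _ h)
    have hgap : ¬ t u - p u ≤ #((kInfl m t p r).erase u) := fun h =>
      huS (mem_union_right _ (mem_filter.2 ⟨mem_range.2 hu, h⟩))
    rw [erase_eq_of_notMem huS'] at hgap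
    have := sub_le_card_of_mem_kInfl_succ hvS
    omega

end Influence

section Relabel

variable {m : ℕ} {t p q : ℕ → ℕ} (σ : Equiv.Perm ℕ)

lemma map_range_eq_range (hσ : ∀ x, σ x < m ↔ x < m) :
    (range m).map σ.toEmbedding = range m := by
  ext y
  obtain ⟨x, rfl⟩ := σ.surjective y
  simp [hσ]

lemma kInfl_eq_map_of_sub_eq (hσ : ∀ x, σ x < m ↔ x < m) (hp : ∀ v < m, p v ≤ t v)
    (hq : ∀ v < m, q v ≤ t v) (hgap : ∀ x < m, t (σ x) - q (σ x) = t x - p x) (r : ℕ) :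
    kInfl m t q r = (kInfl m t p r).map σ.toEmbedding := by
  induction r with
  | zero =>
    ext y
    obtain ⟨x, rfl⟩ := σ.surjective y
    simp only [kInfl, mem_filter, mem_range, hσ, mem_map_equiv, Equiv.symm_apply_apply]
    by_cases hx : x < m
    · have := hgap x hx
      have := hp x hx
      have := hq (σ x) ((hσ x).2 hx)
      omega
    · simp [hx]
  | succ r ih =>
    ext y
    obtain ⟨x, rfl⟩ := σ.surjective y
    have hcard : #((kInfl m t q r).erase (σ x)) = #((kInfl m t p r).erase x) := by
      rw [ih, ← Equiv.coe_toEmbedding, ← map_erase, card_map]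
    simp only [kInfl, mem_map_equiv, Equiv.symm_apply_apply, mem_union, mem_filter, mem_range, hσ]
    rw [hcard, ih, mem_map_equiv, Equiv.symm_apply_apply]
    by_cases hx : x < m
    · rw [hgap x hx]
    · simp [hx]

lemma sum_eq_sum_of_sub_eq (hσ : ∀ x, σ x < m ↔ x < m) (hp : ∀ v < m, p v ≤ t v)
    (hq : ∀ v < m, q v ≤ t v) (hgap : ∀ x < m, t (σ x) - q (σ x) = t x - p x) :
    ∑ v ∈ range m, q v = ∑ v ∈ range m, p v := by
  have hres : ∑ v ∈ range m, (t v - q v) = ∑ v ∈ range m, (t v - p v) := by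
    have hreindex := sum_map (range m) σ.toEmbedding fun v => t v - q v
    rw [map_range_eq_range σ hσ] at hreindex
    rw [hreindex]
    exact sum_congr rfl fun x hx => hgap x (mem_range.1 hx)
  have hsplit : ∀ f : ℕ → ℕ, (∀ v < m, f v ≤ t v) →
      ∑ v ∈ range m, f v + ∑ v ∈ range m, (t v - f v) = ∑ v ∈ range m, t v := fun f hf => by
    rw [← sum_add_distrib]
    exact sum_congr rfl fun v hv => Nat.add_sub_cancel' (hf v (mem_range.1 hv))
  have := hsplit q hq
  have := hsplit p hp
  omega

end Relabel

section Exchange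

variable {m : ℕ} {t p : ℕ → ℕ}

lemma exists_kInfl_eq_map_of_sub_le (σ : Equiv.Perm ℕ) (hσ : ∀ x, σ x < m ↔ x < m)
    (hp : ∀ v < m, p v ≤ t v) (hfit : ∀ x < m, t x - p x ≤ t (σ x)) :
    ∃ q : ℕ → ℕ, (∀ v < m, q v ≤ t v) ∧ ∑ v ∈ range m, q v = ∑ v ∈ range m, p v ∧
      ∀ r, kInfl m t q r = (kInfl m t p r).map σ.toEmbedding := by
  set q : ℕ → ℕ := fun y => t y - (t (σ.symm y) - p (σ.symm y))
  have hq : ∀ v < m, q v ≤ t v := fun v _ => Nat.sub_le _ _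
  have hgap : ∀ x < m, t (σ x) - q (σ x) = t x - p x := fun x hx => by
    have := hfit x hx
    simp only [q, Equiv.symm_apply_apply]
    omega
  exact ⟨q, hq, sum_eq_sum_of_sub_eq σ hσ hp hq hgap, kInfl_eq_map_of_sub_eq σ hσ hp hq hgap⟩

lemma exists_kInfl_eq_map_swap (hp : ∀ v < m, p v ≤ t v) {r u v : ℕ} (hu : u < m)
    (huS : u ∉ kInfl m t p r) (hvS : v ∈ kInfl m t p r) (htuv : t u ≤ t v) :
    ∃ q : ℕ → ℕ, (∀ v < m, q v ≤ t v) ∧ ∑ v ∈ range m, q v = ∑ v ∈ range m, p v ∧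
      ∀ s, kInfl m t q s = (kInfl m t p s).map (Equiv.swap u v).toEmbedding := by
  have hv : v < m := mem_range.1 (kInfl_subset_range r hvS)
  have hlt := sub_lt_sub_of_mem_kInfl_of_notMem hp hu huS hvS
  refine exists_kInfl_eq_map_of_sub_le _ (fun x => ?_) hp fun x hx => ?_
  · rw [Equiv.swap_apply_def]
    split_ifs <;> omega
  · have := hp u hu
    rw [Equiv.swap_apply_def]
    split_ifs <;> subst_vars <;> omega

lemma exists_kInfl_eq_range_card (hmono : MonotoneOn t (Set.Iio m)) (hp : ∀ v < m, p v ≤ t v)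
    (r : ℕ) :
    ∃ q : ℕ → ℕ, (∀ v < m, q v ≤ t v) ∧ ∑ v ∈ range m, q v = ∑ v ∈ range m, p v ∧
      (∀ s, #(kInfl m t q s) = #(kInfl m t p s)) ∧
      kInfl m t q r = range #(kInfl m t p r) := by
  induction hn : #(kInfl m t p r \ range #(kInfl m t p r)) using Nat.strong_induction_on
    generalizing p with
  | _ n ih =>
  set S := kInfl m t p r
  obtain h0 | ⟨v, hv⟩ := (S \ range #S).eq_empty_or_nonempty
  · exact ⟨p, hp, rfl, fun _ => rfl,
      eq_of_subset_of_card_le (sdiff_eq_empty_iff_subset.1 h0) (card_range _).le⟩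
  obtain ⟨u, hu⟩ : (range #S \ S).Nonempty := by
    rw [← card_pos, card_sdiff_comm (card_range _)]
    exact card_pos.2 ⟨v, hv⟩
  obtain ⟨hvS, hvk⟩ := mem_sdiff.1 hv
  obtain ⟨huk, huS⟩ := mem_sdiff.1 hu
  have hvm : v < m := mem_range.1 (kInfl_subset_range r hvS)
  have huv : u < v := by
    rw [mem_range] at huk hvk
    omega
  obtain ⟨p', hp', hsum, hmap⟩ :=
    exists_kInfl_eq_map_swap hp (huv.trans hvm) huS hvS (hmono (huv.trans hvm) hvm huv.le)
  have hcard : ∀ s, #(kInfl m t p' s) = #(kInfl m t p s) := fun s => by rw [hmap, card_map]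
  have hdrop : kInfl m t p' r \ range #S = (S \ range #S).erase v := by
    ext y
    rw [hmap, mem_sdiff, mem_erase, mem_sdiff, mem_map_equiv, Equiv.symm_swap]
    rcases eq_or_ne y u with rfl | hyu
    · exact iff_of_false (fun h => h.2 huk) (fun h => huS h.2.1)
    rcases eq_or_ne y v with rfl | hyv
    · rw [Equiv.swap_apply_right]
      exact iff_of_false (fun h => huS h.1) (fun h => h.1 rfl)
    rw [Equiv.swap_apply_of_ne_of_ne hyu hyv]
    tauto
  obtain ⟨q, hq, hsumq, hcardq, hqr⟩ := ih _ (hn ▸ card_erase_lt_of_mem hv) hp'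
    (by rw [hcard, hdrop])
  exact ⟨q, hq, hsumq.trans hsum, fun s => (hcardq s).trans (hcard s), hqr.trans (by rw [hcard])⟩

end Exchange

theorem clique_prefix_optimal_general (m ℓ k : ℕ)
    (t p : ℕ → ℕ)
    (hmono : ∀ i j, i ≤ j → j < m → t i ≤ t j)
    (hp : ∀ v < m, p v ≤ t v)
    (hcov : kInfl m t p ℓ = range m)
    (hk : (kInfl m t p (ℓ - 1)).card = k) :
    ∃ q : ℕ → ℕ, (∀ v < m, q v ≤ t v) ∧ kInfl m t q ℓ = range m ∧
      (∑ v ∈ range m, q v) = ∑ v ∈ range m, p v ∧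
      kInfl m t q (ℓ - 1) = range k := by
  obtain ⟨q, hq, hsum, hcard, hprefix⟩ :=
    exists_kInfl_eq_range_card (fun i _ j hj hij => hmono i j hij hj) hp (ℓ - 1)
  refine ⟨q, hq, ?_, hsum, hk ▸ hprefix⟩
  exact eq_of_subset_of_card_le (kInfl_subset_range ℓ) (by rw [hcard, hcov])

/-- in a complete graph with non-decreasing thresholds, if some
`ℓ`-optimal solution influences exactly `k < m` nodes by the end of round `ℓ-1`, then
there is an `ℓ`-optimal solution (same cost) influencing exactly the `k` nodes of
smallest threshold by the end of round `ℓ-1`. -/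
theorem clique_prefix_optimal (m lam ℓ k : ℕ) (hl1 : 1 ≤ ℓ) (hl2 : ℓ ≤ lam)
    (t p : ℕ → ℕ)
    (hmono : ∀ i j, i ≤ j → j < m → t i ≤ t j)
    (hbd : ∀ v < m, 1 ≤ t v ∧ t v ≤ m - 1)
    (hp : ∀ v < m, p v ≤ t v)
    (hcov : kInfl m t p ℓ = range m)
    (hopt : ∀ q : ℕ → ℕ, (∀ v < m, q v ≤ t v) → kInfl m t q ℓ = range m →
      ∑ v ∈ range m, p v ≤ ∑ v ∈ range m, q v)
    (hk : (kInfl m t p (ℓ - 1)).card = k) (hkm : k < m) :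
    ∃ q : ℕ → ℕ, (∀ v < m, q v ≤ t v) ∧ kInfl m t q ℓ = range m ∧
      (∑ v ∈ range m, q v) = ∑ v ∈ range m, p v ∧
      kInfl m t q (ℓ - 1) = range k :=
  clique_prefix_optimal_general m ℓ k t p hmono hp hcov hk
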